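/- arXiv:2602.08564 — 2 statements merged into one kernel-verified Lean document; each statement's English description precedes it below -/
import Mathlib

section
/- The integral over the real line of Φ(u)·Φ(−u) du equals 1/√π, where Φ is the standard normal CDF. -/
open MeasureTheory Real

/-- Standard normal CDF. -/
noncomputable def stdNormalCDF (u : ℝ) : ℝ :=
  ∫ t in Set.Iic u, (Real.sqrt (2 * Real.pi))⁻¹ * Real.exp (-t ^ 2 / 2)

/-!
With `Φ' = φ` and `φ'(u) = -u φ(u)`, integrating by parts twice turns `∫ Φ(u) Φ(-u) du` into
`2 ∫ φ² = π⁻¹ ∫ exp (-u²) = 1 / √π`. Concretely,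
`P(u) = u Φ(u) Φ(-u) + φ(u) (Φ(-u) - Φ(u)) + π⁻¹ ∫₀ᵘ exp (-t²) dt`
is an odd primitive of the integrand. The boundary terms vanish at `+∞` by Mills' inequality
`u Φ(-u) ≤ φ(u)`, so the integral is `2 lim_{u → ∞} P(u) = 2 π⁻¹ √π / 2`. Integrability is
automatic: the integrand is even and nonnegative, with a primitive converging at `+∞`.
-/

open Filter Set Topology ProbabilityTheory

theorem integrable_of_even_of_integrableOn_Ioi {E : Type*} [NormedAddCommGroup E] {f : ℝ → E}
    (heven : ∀ x, f (-x) = f x) (hf : IntegrableOn f (Ioi 0)) : Integrable f := by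
  rw [← integrableOn_univ, ← Iio_union_Ici (a := (0 : ℝ)), integrableOn_union,
    integrableOn_Ici_iff_integrableOn_Ioi]
  refine ⟨?_, hf⟩
  rw [← (Measure.measurePreserving_neg (volume : Measure ℝ)).integrableOn_comp_preimage
    (Homeomorph.neg ℝ).measurableEmbedding]
  simpa [Function.comp_def, heven] using hf

theorem gaussianPDFReal_zero_neg (v : NNReal) (x : ℝ) :
    gaussianPDFReal 0 v (-x) = gaussianPDFReal 0 v x := by
  simp [gaussianPDFReal]

theorem hasDerivAt_gaussianPDFReal (μ : ℝ) (v : NNReal) (x : ℝ) :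
    HasDerivAt (gaussianPDFReal μ v) (-(x - μ) / v * gaussianPDFReal μ v x) x := by
  have h : HasDerivAt (fun y => -(y - μ) ^ 2 / (2 * v)) (-(x - μ) / v) x :=
    (((hasDerivAt_id' x).sub_const μ).pow 2).neg.div_const _ |>.congr_deriv (by ring)
  exact (h.exp.const_mul _).congr_deriv (by rw [gaussianPDFReal]; ring)

theorem tendsto_gaussianPDFReal_atTop (μ : ℝ) (v : NNReal) :
    Tendsto (gaussianPDFReal μ v) atTop (𝓝 0) := by
  rcases eq_or_ne v 0 with rfl | hv
  · rw [gaussianPDFReal_zero_var]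
    exact tendsto_const_nhds
  rw [gaussianPDFReal_def, ← mul_zero (√(2 * π * v))⁻¹]
  refine (tendsto_exp_comp_nhds_zero.2 ?_).const_mul _
  simp_rw [neg_div]
  refine tendsto_neg_atBot_iff.2 (Tendsto.atTop_div_const (by positivity) ?_)
  exact (tendsto_pow_atTop two_ne_zero).comp (tendsto_atTop_add_const_right _ (-μ) tendsto_id)

local notation "φ" => gaussianPDFReal 0 1

theorem gaussianPDFReal_zero_one_apply (t : ℝ) :
    φ t = (√(2 * π))⁻¹ * exp (-t ^ 2 / 2) := by
  simp [gaussianPDFReal]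

theorem two_mul_gaussianPDFReal_zero_one_sq (t : ℝ) :
    2 * φ t ^ 2 = π⁻¹ * exp (-t ^ 2) := by
  rw [gaussianPDFReal_zero_one_apply, mul_pow, inv_pow, sq_sqrt (by positivity), ← exp_nat_mul]
  field_simp
  ring_nf

theorem stdNormalCDF_eq_integral (u : ℝ) : stdNormalCDF u = ∫ t in Iic u, φ t := by
  simp only [stdNormalCDF, gaussianPDFReal_zero_one_apply]

theorem stdNormalCDF_nonneg (u : ℝ) : 0 ≤ stdNormalCDF u := by
  rw [stdNormalCDF_eq_integral]
  exact setIntegral_nonneg measurableSet_Iic fun t _ => gaussianPDFReal_nonneg 0 1 t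

theorem stdNormalCDF_le_one (u : ℝ) : stdNormalCDF u ≤ 1 := by
  rw [stdNormalCDF_eq_integral, ← integral_gaussianPDFReal_eq_one 0 one_ne_zero]
  exact setIntegral_le_integral (integrable_gaussianPDFReal 0 1)
    (Eventually.of_forall (gaussianPDFReal_nonneg 0 1))

theorem stdNormalCDF_neg (u : ℝ) : stdNormalCDF (-u) = ∫ t in Ioi u, φ t := by
  rw [stdNormalCDF_eq_integral, ← integral_comp_neg_Ioi]
  simp only [gaussianPDFReal_zero_neg]

theorem hasDerivAt_stdNormalCDF (u : ℝ) : HasDerivAt stdNormalCDF (φ u) u := by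
  have hφ := integrable_gaussianPDFReal 0 1
  have hFTC := intervalIntegral.integral_hasDerivAt_right (hφ.intervalIntegrable (a := 0))
    (stronglyMeasurable_gaussianPDFReal 0 1).stronglyMeasurableAtFilter
    (hasDerivAt_gaussianPDFReal 0 1 u).continuousAt
  refine (hFTC.const_add (stdNormalCDF 0)).congr_of_eventuallyEq (Eventually.of_forall fun v => ?_)
  dsimp only
  rw [stdNormalCDF_eq_integral, stdNormalCDF_eq_integral, add_comm,
    ← intervalIntegral.integral_Iic_sub_Iic hφ.integrableOn hφ.integrableOn, sub_add_cancel]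

theorem hasDerivAt_neg_gaussianPDFReal_zero_one (x : ℝ) :
    HasDerivAt (fun t => -φ t) (x * φ x) x :=
  (hasDerivAt_gaussianPDFReal 0 1 x).neg.congr_deriv (by simp)

theorem integral_Ioi_mul_gaussianPDFReal_zero_one {u : ℝ} (hu : 0 ≤ u) :
    ∫ t in Ioi u, t * φ t = φ u := by
  simpa using integral_Ioi_of_hasDerivAt_of_nonneg'
    (fun x _ => hasDerivAt_neg_gaussianPDFReal_zero_one x)
    (fun x hx => mul_nonneg (hu.trans hx.out.le) (gaussianPDFReal_nonneg 0 1 x))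
    (tendsto_gaussianPDFReal_atTop 0 1).neg

theorem integrableOn_Ioi_mul_gaussianPDFReal_zero_one {u : ℝ} (hu : 0 ≤ u) :
    IntegrableOn (fun t => t * φ t) (Ioi u) :=
  integrableOn_Ioi_deriv_of_nonneg' (fun x _ => hasDerivAt_neg_gaussianPDFReal_zero_one x)
    (fun x hx => mul_nonneg (hu.trans hx.out.le) (gaussianPDFReal_nonneg 0 1 x))
    (tendsto_gaussianPDFReal_atTop 0 1).neg

theorem mul_stdNormalCDF_neg_le {u : ℝ} (hu : 0 ≤ u) : u * stdNormalCDF (-u) ≤ φ u := by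
  rw [stdNormalCDF_neg, ← integral_Ioi_mul_gaussianPDFReal_zero_one hu, ← integral_const_mul]
  refine setIntegral_mono_on ((integrable_gaussianPDFReal 0 1).integrableOn.const_mul u)
    (integrableOn_Ioi_mul_gaussianPDFReal_zero_one hu) measurableSet_Ioi fun t ht => ?_
  exact mul_le_mul_of_nonneg_right (le_of_lt ht) (gaussianPDFReal_nonneg 0 1 t)

theorem tendsto_mul_stdNormalCDF_neg_atTop :
    Tendsto (fun u => u * stdNormalCDF (-u)) atTop (𝓝 0) := by
  refine squeeze_zero' ?_ ?_ (tendsto_gaussianPDFReal_atTop 0 1)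
  · filter_upwards [eventually_ge_atTop 0] with u hu
    exact mul_nonneg hu (stdNormalCDF_nonneg _)
  · filter_upwards [eventually_ge_atTop 0] with u hu
    exact mul_stdNormalCDF_neg_le hu

noncomputable def cdfMulCdfNegPrimitive (u : ℝ) : ℝ :=
  u * stdNormalCDF u * stdNormalCDF (-u) + φ u * (stdNormalCDF (-u) - stdNormalCDF u) +
    π⁻¹ * ∫ t in 0..u, exp (-t ^ 2)

theorem hasDerivAt_cdfMulCdfNegPrimitive (u : ℝ) :
    HasDerivAt cdfMulCdfNegPrimitive (stdNormalCDF u * stdNormalCDF (-u)) u := by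
  have hΦ := hasDerivAt_stdNormalCDF u
  have hΦneg : HasDerivAt (fun v => stdNormalCDF (-v)) (-φ u) u :=
    ((hasDerivAt_stdNormalCDF (-u)).comp u (hasDerivAt_neg u)).congr_deriv
      (by simp [gaussianPDFReal_zero_neg])
  have hG : HasDerivAt (fun v => ∫ t in 0..v, exp (-t ^ 2)) (exp (-u ^ 2)) u :=
    ((by fun_prop : Continuous fun t : ℝ => exp (-t ^ 2)).integral_hasStrictDerivAt 0 u).hasDerivAt
  refine (((((hasDerivAt_id u).mul hΦ).mul hΦneg).add
    ((hasDerivAt_gaussianPDFReal 0 1 u).mul (hΦneg.sub hΦ))).add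
    (hG.const_mul π⁻¹)).congr_deriv ?_
  rw [← two_mul_gaussianPDFReal_zero_one_sq]
  simp only [id_eq, Pi.mul_apply, Pi.sub_apply, NNReal.coe_one, sub_zero, div_one]
  ring

theorem cdfMulCdfNegPrimitive_neg (u : ℝ) :
    cdfMulCdfNegPrimitive (-u) = -cdfMulCdfNegPrimitive u := by
  have hG : ∫ t in 0..-u, exp (-t ^ 2) = -∫ t in 0..u, exp (-t ^ 2) := by
    have h := intervalIntegral.integral_comp_neg (a := 0) (b := u) fun t => exp (-t ^ 2)
    simp only [neg_sq, neg_zero] at h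
    rw [intervalIntegral.integral_symm, h]
  simp only [cdfMulCdfNegPrimitive, neg_neg, gaussianPDFReal_zero_neg, hG]
  ring

theorem tendsto_cdfMulCdfNegPrimitive_atTop :
    Tendsto cdfMulCdfNegPrimitive atTop (𝓝 (1 / (2 * √π))) := by
  have hΦ : IsBoundedUnder (· ≤ ·) atTop fun u => ‖stdNormalCDF u‖ :=
    isBoundedUnder_of ⟨1, fun u => by
      rw [norm_of_nonneg (stdNormalCDF_nonneg u)]; exact stdNormalCDF_le_one u⟩
  have hΦdiff : IsBoundedUnder (· ≤ ·) atTop fun u => ‖stdNormalCDF (-u) - stdNormalCDF u‖ :=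
    isBoundedUnder_of ⟨1, fun u => by
      rw [Real.norm_eq_abs, abs_le]
      constructor <;> linarith [stdNormalCDF_nonneg u, stdNormalCDF_le_one u,
        stdNormalCDF_nonneg (-u), stdNormalCDF_le_one (-u)]⟩
  have hG : Tendsto (fun u => ∫ t in 0..u, exp (-t ^ 2)) atTop (𝓝 (√π / 2)) := by
    have h := integral_gaussian_Ioi 1
    simp only [neg_mul, one_mul, div_one] at h
    rw [← h]
    exact intervalIntegral_tendsto_integral_Ioi 0
      (by simpa using (integrable_exp_neg_mul_sq one_pos).integrableOn) tendsto_id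
  have h := ((isBoundedUnder_le_mul_tendsto_zero hΦ tendsto_mul_stdNormalCDF_neg_atTop).add
    ((tendsto_gaussianPDFReal_atTop 0 1).zero_mul_isBoundedUnder_le hΦdiff)).add
    (hG.const_mul π⁻¹)
  have hlim : 0 + 0 + π⁻¹ * (√π / 2) = 1 / (2 * √π) := by
    have := sq_sqrt pi_pos.le
    field_simp
    linarith
  rw [← hlim]
  exact h.congr fun u => by rw [cdfMulCdfNegPrimitive]; ring

theorem integrable_cdf_mul_cdf_neg : Integrable fun u => stdNormalCDF u * stdNormalCDF (-u) := by
  refine integrable_of_even_of_integrableOn_Ioi (fun u => by rw [neg_neg, mul_comm]) ?_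
  exact integrableOn_Ioi_deriv_of_nonneg' (fun x _ => hasDerivAt_cdfMulCdfNegPrimitive x)
    (fun x _ => mul_nonneg (stdNormalCDF_nonneg x) (stdNormalCDF_nonneg (-x)))
    tendsto_cdfMulCdfNegPrimitive_atTop

theorem tendsto_cdfMulCdfNegPrimitive_atBot :
    Tendsto cdfMulCdfNegPrimitive atBot (𝓝 (-(1 / (2 * √π)))) := by
  refine (tendsto_cdfMulCdfNegPrimitive_atTop.comp tendsto_neg_atBot_atTop).neg.congr fun u => ?_
  simp [cdfMulCdfNegPrimitive_neg]

theorem integral_cdf_mul_cdf_neg :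
    ∫ u : ℝ, stdNormalCDF u * stdNormalCDF (-u) = 1 / Real.sqrt Real.pi := by
  rw [integral_of_hasDerivAt_of_tendsto hasDerivAt_cdfMulCdfNegPrimitive
    integrable_cdf_mul_cdf_neg tendsto_cdfMulCdfNegPrimitive_atBot
    tendsto_cdfMulCdfNegPrimitive_atTop]
  ring
end

section
/- For the Leaky ReLU f with parameter α ∈ (0,1) and any real numbers a, b, the discrepancy |f((a+b)/2) − (f(a)+f(b))/2| is at most ((1−α)/2)·min(|a|, |b|). -/
/-- Leaky ReLU with slope `α` on the negative part. -/
noncomputable def leakyRelu (α z : ℝ) : ℝ := if 0 ≤ z then z else α * z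

theorem leakyRelu_discrepancy_le (α a b : ℝ) (hα0 : 0 < α) (hα1 : α < 1) :
    |leakyRelu α ((a + b) / 2) - (leakyRelu α a + leakyRelu α b) / 2|
      ≤ ((1 - α) / 2) * min |a| |b| := by
  unfold leakyRelu
  rcases le_or_gt 0 a with ha | ha <;> rcases le_or_gt 0 b with hb | hb
  · rw [if_pos ha, if_pos hb, if_pos (by linarith), abs_of_nonneg ha, abs_of_nonneg hb]
    simp only [show (a+b)/2 - (a+b)/2 = 0 by ring, abs_zero]
    exact mul_nonneg (by linarith) (le_min (by linarith) (by linarith))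
  · rw [if_pos ha, if_neg (not_le.2 hb), abs_of_nonneg ha, abs_of_neg hb]
    rw [abs_le]
    rcases min_cases a (-b) with ⟨hm, hm'⟩ | ⟨hm, hm'⟩ <;> rw [hm] <;>
      split_ifs with h <;> constructor <;> nlinarith
  · rw [if_neg (not_le.2 ha), if_pos hb, abs_of_neg ha, abs_of_nonneg hb]
    rw [abs_le]
    rcases min_cases (-a) b with ⟨hm, hm'⟩ | ⟨hm, hm'⟩ <;> rw [hm] <;>
      split_ifs with h <;> constructor <;> nlinarith
  · rw [if_neg (not_le.2 ha), if_neg (not_le.2 hb), if_neg (by push_neg; linarith),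
      abs_of_neg ha, abs_of_neg hb]
    simp only [show α * ((a+b)/2) - (α*a + α*b)/2 = 0 by ring, abs_zero]
    exact mul_nonneg (by linarith) (le_min (by linarith) (by linarith))
end
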